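/- arXiv:2012.12470 — 2 statements merged into one kernel-verified Lean document; each statement's English description precedes it below -/
import Mathlib

section
/- Let A be a symmetric positive definite real 3×3 matrix, u ∈ ℝ³ a unit vector, and Θ a nonempty finite set of reals with 0 < |θ'| ≤ π for every θ' ∈ Θ; set θ_m := min_{θ'∈Θ} |θ'|. Suppose Δ* > 0 satisfies Δ(v,u) ≥ Δ* for every unit eigenvector v of A, and let 0 < γ < 4Δ*/π² and 0 < δ < (4Δ*/π² − γ)·θ_m²/2. If (R,θ) ∈ SO(3) × ℝ satisfies ψ(A·T(R,θ)) = 0, γθ + 2uᵀψ(A·T(R,θ)) = 0, and U(R,θ) − min_{θ'∈Θ} U(R,θ') ≤ δ, then R = I₃ and θ = 0. (That is, the only critical point of U lying in the flow set is the desired equilibrium (I₃,0).) -/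
open Matrix

noncomputable section

abbrev M3 : Type := Matrix (Fin 3) (Fin 3) ℝ
abbrev V3 : Type := Fin 3 → ℝ

/-- skew-symmetric matrix associated to `x`: `skew x *ᵥ y = x ×₃ y`. -/
def skew (x : V3) : M3 :=
  !![0, -x 2, x 1; x 2, 0, -x 0; -x 1, x 0, 0]

/-- the special orthogonal group SO(3) as a subset of 3×3 matrices -/
def SO3 : Set M3 := {R | Rᵀ * R = 1 ∧ R.det = 1}

/-- Rodrigues formula -/
def Ra (θ : ℝ) (u : V3) : M3 :=
  1 + Real.sin θ • skew u + (1 - Real.cos θ) • (skew u * skew u)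

/-- `psi M = vec (P_a M)`, the vector part of the antisymmetric projection -/
def psi (M : M3) : V3 :=
  ![(M 2 1 - M 1 2) / 2, (M 0 2 - M 2 0) / 2, (M 1 0 - M 0 1) / 2]

/-- the angular-warping transformation `T(R,θ) = R · Ra(θ,u)` -/
def Tmap (u : V3) (R : M3) (θ : ℝ) : M3 := R * Ra θ u

/-- the potential function `U(R,θ)` on SO(3) × ℝ -/
def Ufun (A : M3) (u : V3) (γ : ℝ) (R : M3) (θ : ℝ) : ℝ :=
  (A * (1 - Tmap u R θ)).trace + γ / 2 * θ ^ 2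

/-- Euclidean norm on ℝ³ -/
def enorm3 (x : V3) : ℝ := Real.sqrt (x ⬝ᵥ x)

/-- Frobenius norm of a 3×3 matrix -/
def fnorm (M : M3) : ℝ := Real.sqrt ((Mᵀ * M).trace)

/-- `E(M) := (tr(M) I − Mᵀ)/2` -/
def Emap (M : M3) : M3 := (2⁻¹ : ℝ) • (M.trace • (1 : M3) - Mᵀ)

/-- `D_R(R,θ)` from Lemma 2 -/
def DR (A : M3) (u : V3) (R : M3) (θ : ℝ) : M3 :=
  Ra θ u * Emap (A * Tmap u R θ) * (Ra θ u)ᵀ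

/-- `D_θ(R,θ)` from Lemma 2 -/
def Dθ (A : M3) (u : V3) (R : M3) (θ : ℝ) : V3 :=
  (Ra θ u * Emap (A * Tmap u R θ)) *ᵥ u - skew (Ra θ u *ᵥ psi (A * Tmap u R θ)) *ᵥ u

/-- Δ(v,u) from the construction of the synergistic gap -/
def Delta (A : M3) (v u : V3) : ℝ :=
  u ⬝ᵥ ((A.trace • (1 : M3) - A - (2 * (v ⬝ᵥ A *ᵥ v)) • ((1 : M3) - vecMulVec v v)) *ᵥ u)

/-- `v` is a unit eigenvector of `A` -/
def IsUnitEigen (A : M3) (v : V3) : Prop :=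
  v ⬝ᵥ v = 1 ∧ ∃ lam : ℝ, A *ᵥ v = lam • v

/-- Ā := (tr(A) I − A)/2 -/
def Abar (A : M3) : M3 := (2⁻¹ : ℝ) • (A.trace • (1 : M3) - A)

/-- `lam` is an eigenvalue of `M` -/
def IsEigen (M : M3) (lam : ℝ) : Prop := ∃ w : V3, w ≠ 0 ∧ M *ᵥ w = lam • w

/-! At a critical point `ψ(A T) = 0`, so `γ θ = 0` gives `θ = 0` and `A R` is symmetric. For
positive definite `A` and orthogonal `R` this forces `R = Rᵀ`, because then
`tr ((R - Rᵀ)ᵀ A (R - Rᵀ)) = 0`. So `R` is an involution in SO(3): either `I` or the half-turn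
`2 w wᵀ - I` about a unit vector `w`, and `w` is an eigenvector of `A` since `R` commutes with
`A`. For the half-turn, `U(R, 0) - U(R, θ') = (1 - cos θ') Δ(w, u) - γ θ'² / 2`, which by
`1 - cos θ' ≥ 2 θ'² / π²` exceeds `δ` for every `θ' ∈ Θ`, contradicting the flow-set
condition. -/

namespace Matrix

variable {n : Type*} [Fintype n]

theorem PosDef.eq_zero_of_trace_transpose_mul_mul_eq_zero {A X : Matrix n n ℝ} (hA : A.PosDef)
    (h : (Xᵀ * A * X).trace = 0) : X = 0 := by
  have hcol : ∀ j, Xᵀ j ⬝ᵥ A *ᵥ Xᵀ j = 0 := by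
    have hsum : ∑ j, Xᵀ j ⬝ᵥ A *ᵥ Xᵀ j = 0 := by
      simpa [trace, mul_mul_apply] using h
    intro j
    refine (Finset.sum_eq_zero_iff_of_nonneg fun i _ => ?_).1 hsum j (Finset.mem_univ j)
    simpa using hA.posSemidef.dotProduct_mulVec_nonneg (Xᵀ i)
  have hrow : ∀ j, Xᵀ j = 0 := fun j =>
    by_contra fun hj => by simpa [hcol j] using hA.dotProduct_mulVec_pos hj
  ext i j
  simpa using congrFun (hrow j) i

theorem PosDef.isSymm_of_isSymm_mul [DecidableEq n] {A R : Matrix n n ℝ} (hA : A.PosDef)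
    (hR : Rᵀ * R = 1) (hAR : (A * R).IsSymm) : R.IsSymm := by
  have hAt : Aᵀ = A := (isHermitian_iff_isSymm.mp hA.1).eq
  have hRRt : R * Rᵀ = 1 := mul_eq_one_comm.mp hR
  have hRtA : Rᵀ * A = A * R := by simpa [transpose_mul, hAt] using hAR.eq
  have h1 : R * A * R = A := by rw [mul_assoc, ← hRtA, ← mul_assoc, hRRt, one_mul]
  have h2 : Rᵀ * A * Rᵀ = A := by rw [hRtA, mul_assoc, hRRt, mul_one]
  have h0 : ((R - Rᵀ)ᵀ * A * (R - Rᵀ)).trace = 0 := by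
    have e1 : (Rᵀ * A * R).trace = A.trace := by
      rw [trace_mul_cycle, hRRt, one_mul]
    have e2 : (R * A * Rᵀ).trace = A.trace := by
      rw [trace_mul_cycle, hR, one_mul]
    simp only [transpose_sub, transpose_transpose, sub_mul, mul_sub, trace_sub, e1, e2, h1, h2]
    ring
  exact (sub_eq_zero.mp (hA.eq_zero_of_trace_transpose_mul_mul_eq_zero h0)).symm

theorem IsSymm.eq_zero_of_mul_self_eq_smul {M : Matrix n n ℝ} (hM : M.IsSymm) {c : ℝ}
    (hsq : M * M = c • M) (htr : M.trace = 0) : M = 0 := by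
  rw [← trace_conjTranspose_mul_self_eq_zero_iff, conjTranspose_eq_transpose_of_trivial, hM.eq,
    hsq, trace_smul, htr, smul_zero]

theorem IsSymm.trace_mul_eq_zero_of_transpose_eq_neg {S K : Matrix n n ℝ} (hS : S.IsSymm)
    (hK : Kᵀ = -K) : (S * K).trace = 0 := by
  have h := trace_transpose (S * K)
  rw [transpose_mul, hK, hS.eq, neg_mul, trace_neg, trace_mul_comm] at h
  linarith

theorem exists_smul_dotProduct_self_eq_one {v : n → ℝ} (hv : v ≠ 0) :
    ∃ c : ℝ, (c • v) ⬝ᵥ (c • v) = 1 := by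
  have hpos : 0 < v ⬝ᵥ v :=
    lt_of_le_of_ne (by simpa using dotProduct_star_self_nonneg v)
      (Ne.symm (dotProduct_self_eq_zero.not.mpr hv))
  refine ⟨(√(v ⬝ᵥ v))⁻¹, ?_⟩
  rw [smul_dotProduct, dotProduct_smul, smul_eq_mul, smul_eq_mul, ← mul_assoc, ← mul_inv,
    Real.mul_self_sqrt hpos.le, inv_mul_cancel₀ hpos.ne']

theorem exists_unit_mulVec_eq_self [DecidableEq n] {R : Matrix n n ℝ} (hRR : R * R = 1)
    (hR : R ≠ -1) : ∃ w : n → ℝ, w ⬝ᵥ w = 1 ∧ R *ᵥ w = w := by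
  have hfix : ∀ x, R *ᵥ ((1 + R) *ᵥ x) = (1 + R) *ᵥ x := fun x => by
    rw [mulVec_mulVec, mul_add, mul_one, hRR, add_comm]
  obtain ⟨j, hj⟩ : ∃ j, (1 + R) *ᵥ Pi.single j 1 ≠ 0 := by
    by_contra! h
    refine hR (eq_neg_of_add_eq_zero_right ?_)
    ext i j
    simpa using congrFun (h j) i
  obtain ⟨c, hc⟩ := exists_smul_dotProduct_self_eq_one hj
  exact ⟨c • (1 + R) *ᵥ Pi.single j 1, hc, by rw [mulVec_smul, hfix]⟩

theorem trace_sq_sub_trace_mul_self_fin_three {α : Type*} [CommRing α]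
    (M : Matrix (Fin 3) (Fin 3) α) : M.trace ^ 2 - (M * M).trace = 2 * M.adjugate.trace := by
  simp only [trace_fin_three, mul_apply, Fin.sum_univ_three, adjugate_fin_three, of_apply,
    cons_val', cons_val_zero, cons_val_fin_one, cons_val_one, cons_val]
  ring

end Matrix

def halfTurn (w : V3) : M3 := (2 : ℝ) • vecMulVec w w - 1

theorem halfTurn_isSymm (w : V3) : (halfTurn w).IsSymm := by
  simp only [IsSymm, halfTurn, transpose_sub, transpose_smul, transpose_one, transpose_vecMulVec]

theorem halfTurn_mulVec (w x : V3) : halfTurn w *ᵥ x = (2 * (w ⬝ᵥ x)) • w - x := by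
  rw [halfTurn, sub_mulVec, smul_mulVec, vecMulVec_mulVec, one_mulVec, op_smul_eq_smul, smul_smul]

theorem eq_halfTurn_of_isSymm {R : M3} {w : V3} (hR : R.IsSymm) (hRR : R * R = 1)
    (hw : w ⬝ᵥ w = 1) (hRw : R *ᵥ w = w) (htr : R.trace = -1) : R = halfTurn w := by
  set P := vecMulVec w w
  have hRP : R * P = P := by rw [mul_vecMulVec, hRw]
  have hPR : P * R = P := by rw [vecMulVec_mul, ← mulVec_transpose, hR.eq, hRw]
  have hPP : P * P = P := by rw [vecMulVec_mul_vecMulVec, hw, one_smul]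
  set M := R + 1 - (2 : ℝ) • P with hM
  have hsq : M * M = (2 : ℝ) • M := by
    simp only [hM, add_mul, mul_add, sub_mul, mul_sub, smul_mul_assoc, mul_smul_comm, one_mul,
      mul_one, hRR, hRP, hPR, hPP]
    module
  have hsymm : M.IsSymm := by
    simp only [hM, IsSymm, transpose_sub, transpose_add, transpose_smul, transpose_one, hR.eq, P,
      transpose_vecMulVec]
  have htr' : M.trace = 0 := by
    rw [hM, trace_sub, trace_add, trace_smul, htr, trace_one, trace_vecMulVec, hw]
    norm_num
  rw [halfTurn, eq_sub_iff_add_eq, ← sub_eq_zero]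
  exact hsymm.eq_zero_of_mul_self_eq_smul hsq htr'

theorem mul_self_eq_one_of_mem_SO3 {R : M3} (hR : R ∈ SO3) (hsymm : R.IsSymm) : R * R = 1 := by
  simpa [hsymm.eq] using hR.1

theorem trace_eq_three_or_neg_one_of_mem_SO3 {R : M3} (hR : R ∈ SO3) (hsymm : R.IsSymm) :
    R.trace = 3 ∨ R.trace = -1 := by
  have hadj : R.adjugate = Rᵀ := by
    calc R.adjugate = Rᵀ * (R * R.adjugate) := by rw [← mul_assoc, hR.1, one_mul]
    _ = Rᵀ := by rw [mul_adjugate, hR.2, one_smul, mul_one]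
  have h := R.trace_sq_sub_trace_mul_self_fin_three
  rw [mul_self_eq_one_of_mem_SO3 hR hsymm, hadj, trace_transpose, trace_one] at h
  have hfac : (R.trace - 3) * (R.trace + 1) = 0 := by
    simp only [Fintype.card_fin, Nat.cast_ofNat] at h
    linear_combination h
  rcases mul_eq_zero.mp hfac with h3 | h1
  · exact Or.inl (sub_eq_zero.mp h3)
  · exact Or.inr (eq_neg_of_add_eq_zero_left h1)

theorem eq_one_or_eq_halfTurn_of_mem_SO3 {R : M3} (hR : R ∈ SO3) (hsymm : R.IsSymm) :
    R = 1 ∨ ∃ w : V3, w ⬝ᵥ w = 1 ∧ R = halfTurn w := by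
  have hRR := mul_self_eq_one_of_mem_SO3 hR hsymm
  rcases trace_eq_three_or_neg_one_of_mem_SO3 hR hsymm with htr | htr
  · left
    have hsq : (1 - R) * (1 - R) = (2 : ℝ) • (1 - R) := by
      simp only [sub_mul, mul_sub, one_mul, mul_one, hRR]
      module
    have hsymm' : (1 - R).IsSymm := by
      simp only [IsSymm, transpose_sub, transpose_one, hsymm.eq]
    have htr' : (1 - R).trace = 0 := by
      rw [trace_sub, trace_one, htr]
      norm_num
    exact (sub_eq_zero.mp (hsymm'.eq_zero_of_mul_self_eq_smul hsq htr')).symm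
  · right
    have hne : R ≠ -1 := by
      rintro rfl
      norm_num [trace_neg] at htr
    obtain ⟨w, hw, hRw⟩ := exists_unit_mulVec_eq_self hRR hne
    exact ⟨w, hw, eq_halfTurn_of_isSymm hsymm hRR hw hRw htr⟩

theorem mulVec_eq_smul_of_commute_halfTurn {A : M3} {w : V3} (hw : w ⬝ᵥ w = 1)
    (h : A * halfTurn w = halfTurn w * A) : A *ᵥ w = (w ⬝ᵥ A *ᵥ w) • w := by
  have hfix : halfTurn w *ᵥ w = w := by
    rw [halfTurn_mulVec, hw, mul_one, two_smul, add_sub_cancel_right]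
  have h' : A *ᵥ w = (2 * (w ⬝ᵥ A *ᵥ w)) • w - A *ᵥ w := by
    rw [← halfTurn_mulVec, mulVec_mulVec, ← h, ← mulVec_mulVec, hfix]
  funext i
  have hi := congrFun h' i
  simp only [Pi.sub_apply, Pi.smul_apply, smul_eq_mul] at hi ⊢
  linarith

theorem skew_transpose (x : V3) : (skew x)ᵀ = -skew x := by
  ext i j
  fin_cases i <;> fin_cases j <;> simp [skew]

theorem skew_mul_self (x : V3) : skew x * skew x = vecMulVec x x - (x ⬝ᵥ x) • 1 := by
  ext i j
  fin_cases i <;> fin_cases j <;>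
    simp [skew, mul_apply, Fin.sum_univ_three, vecMulVec_apply, dotProduct] <;> ring

theorem Tmap_zero (u : V3) (R : M3) : Tmap u R 0 = R := by
  simp [Tmap, Ra]

theorem isSymm_of_psi_eq_zero {M : M3} (h : psi M = 0) : M.IsSymm := by
  have e0 := congrFun h 0
  have e1 := congrFun h 1
  have e2 := congrFun h 2
  simp only [psi, cons_val_zero, cons_val_one, cons_val, Pi.zero_apply, div_eq_zero_iff,
    OfNat.ofNat_ne_zero, or_false] at e0 e1 e2
  ext i j
  fin_cases i <;> fin_cases j <;> simp <;> linarith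

theorem Ufun_zero_sub_Ufun {A R : M3} (u : V3) (γ θ : ℝ) (hAR : (A * R).IsSymm) :
    Ufun A u γ R 0 - Ufun A u γ R θ
      = (1 - Real.cos θ) * (u ⬝ᵥ (A * R) *ᵥ u - (u ⬝ᵥ u) * (A * R).trace)
        - γ / 2 * θ ^ 2 := by
  have h1 : (A * R * skew u).trace = 0 :=
    hAR.trace_mul_eq_zero_of_transpose_eq_neg (skew_transpose u)
  have h2 : (A * R * (skew u * skew u)).trace
      = u ⬝ᵥ (A * R) *ᵥ u - (u ⬝ᵥ u) * (A * R).trace := by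
    rw [skew_mul_self, mul_sub, mul_vecMulVec, trace_sub, trace_vecMulVec, mul_smul_comm, mul_one,
      trace_smul, smul_eq_mul, dotProduct_comm]
  rw [Ufun, Ufun, Tmap_zero, Tmap, Ra]
  simp only [mul_add, mul_one, mul_sub, mul_smul_comm, ← mul_assoc, trace_sub, trace_add,
    trace_smul, smul_eq_mul, h1, ← h2]
  ring

theorem Delta_eq_of_mulVec_eq_smul {A : M3} {w : V3} (u : V3)
    (hAw : A *ᵥ w = (w ⬝ᵥ A *ᵥ w) • w) :
    u ⬝ᵥ (A * halfTurn w) *ᵥ u - (u ⬝ᵥ u) * (A * halfTurn w).trace = Delta A w u := by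
  rw [Delta]
  set lam := w ⬝ᵥ A *ᵥ w
  have htr : (A * vecMulVec w w).trace = lam := by
    rw [mul_vecMulVec, trace_vecMulVec, dotProduct_comm]
  rw [← mulVec_mulVec, halfTurn_mulVec, mulVec_sub, mulVec_smul, hAw, halfTurn, mul_sub,
    mul_smul_comm, mul_one, trace_sub, trace_smul, htr]
  simp only [sub_mulVec, smul_mulVec, one_mulVec, vecMulVec_mulVec, op_smul_eq_smul,
    dotProduct_sub, dotProduct_smul, smul_eq_mul, dotProduct_comm u w]
  ring

theorem lt_one_sub_cos_mul_sub {Δs Δ γ δ t tm : ℝ}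
    (hcos : Real.cos t ≤ 1 - 2 / Real.pi ^ 2 * t ^ 2) (hΔ : Δs ≤ Δ) (hγ : 0 ≤ γ)
    (hγ' : γ < 4 * Δs / Real.pi ^ 2) (htm : 0 ≤ tm) (htm' : tm ≤ |t|)
    (hδ : δ < (4 * Δs / Real.pi ^ 2 - γ) * tm ^ 2 / 2) :
    δ < (1 - Real.cos t) * Δ - γ / 2 * t ^ 2 := by
  have hΔs : 0 ≤ Δs := by
    have : 0 < 4 * Δs / Real.pi ^ 2 := hγ.trans_lt hγ'
    have := (div_pos_iff_of_pos_right (by positivity)).mp this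
    linarith
  have htm2 : tm ^ 2 ≤ t ^ 2 := by simpa using pow_le_pow_left₀ htm htm' 2
  calc δ < (4 * Δs / Real.pi ^ 2 - γ) * tm ^ 2 / 2 := hδ
    _ ≤ (4 * Δs / Real.pi ^ 2 - γ) * t ^ 2 / 2 := by gcongr
    _ = 2 / Real.pi ^ 2 * t ^ 2 * Δs - γ / 2 * t ^ 2 := by ring
    _ ≤ (1 - Real.cos t) * Δs - γ / 2 * t ^ 2 := by gcongr; linarith
    _ ≤ (1 - Real.cos t) * Δ - γ / 2 * t ^ 2 := by
        gcongr
        linarith [Real.cos_le_one t]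

theorem flow_set_critical_point_is_identity_general
    (A : M3) (hA : A.PosDef) (u : V3)
    (Θ : Finset ℝ) (hΘne : Θ.Nonempty) (hΘ : ∀ θ' ∈ Θ, 0 < |θ'| ∧ |θ'| ≤ Real.pi)
    (θm : ℝ) (hθm : θm = Θ.inf' hΘne (fun θ' => |θ'|))
    (Δstar : ℝ)
    (hΔ : ∀ v : V3, IsUnitEigen A v → Δstar ≤ Delta A v u)
    (γ δ : ℝ) (hγ : 0 < γ) (hγ' : γ < 4 * Δstar / Real.pi ^ 2)
    (hδ' : δ < (4 * Δstar / Real.pi ^ 2 - γ) * θm ^ 2 / 2)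
    (R : M3) (hR : R ∈ SO3) (θ : ℝ)
    (hcrit1 : psi (A * Tmap u R θ) = 0)
    (hcrit2 : γ * θ + 2 * (u ⬝ᵥ psi (A * Tmap u R θ)) = 0)
    (hflow : Ufun A u γ R θ - Θ.inf' hΘne (fun θ' => Ufun A u γ R θ') ≤ δ) :
    R = 1 ∧ θ = 0 := by
  have hθ : θ = 0 := by simpa [hcrit1, hγ.ne'] using hcrit2
  subst hθ
  refine ⟨?_, rfl⟩
  have hAR : (A * R).IsSymm := isSymm_of_psi_eq_zero (by rwa [Tmap_zero] at hcrit1)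
  obtain hR1 | ⟨w, hw, rfl⟩ :=
    eq_one_or_eq_halfTurn_of_mem_SO3 hR (hA.isSymm_of_isSymm_mul hR.1 hAR)
  · exact hR1
  exfalso
  have hcomm : A * halfTurn w = halfTurn w * A := by
    rw [← hAR.eq, transpose_mul, (halfTurn_isSymm w).eq, (isHermitian_iff_isSymm.mp hA.1).eq]
  have hAw := mulVec_eq_smul_of_commute_halfTurn hw hcomm
  obtain ⟨θ₀, hθ₀, hmin⟩ := Θ.exists_mem_eq_inf' hΘne (Ufun A u γ (halfTurn w))
  have hgap := Ufun_zero_sub_Ufun u γ θ₀ hAR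
  rw [Delta_eq_of_mulVec_eq_smul u hAw] at hgap
  have hθm_nonneg : 0 ≤ θm := hθm ▸ Finset.le_inf' hΘne _ fun θ' _ => abs_nonneg θ'
  have hlt := lt_one_sub_cos_mul_sub (Real.cos_le_one_sub_mul_cos_sq (hΘ θ₀ hθ₀).2)
    (hΔ w ⟨hw, _, hAw⟩) hγ.le hγ' hθm_nonneg (hθm ▸ Finset.inf'_le _ hθ₀) hδ'
  rw [hmin] at hflow
  linarith

theorem flow_set_critical_point_is_identity
    (A : M3) (hA : A.PosDef) (u : V3) (hu : u ⬝ᵥ u = 1)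
    (Θ : Finset ℝ) (hΘne : Θ.Nonempty) (hΘ : ∀ θ' ∈ Θ, 0 < |θ'| ∧ |θ'| ≤ Real.pi)
    (θm : ℝ) (hθm : θm = Θ.inf' hΘne (fun θ' => |θ'|))
    (Δstar : ℝ) (hΔpos : 0 < Δstar)
    (hΔ : ∀ v : V3, IsUnitEigen A v → Δstar ≤ Delta A v u)
    (γ δ : ℝ) (hγ : 0 < γ) (hγ' : γ < 4 * Δstar / Real.pi ^ 2)
    (hδ : 0 < δ) (hδ' : δ < (4 * Δstar / Real.pi ^ 2 - γ) * θm ^ 2 / 2)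
    (R : M3) (hR : R ∈ SO3) (θ : ℝ)
    (hcrit1 : psi (A * Tmap u R θ) = 0)
    (hcrit2 : γ * θ + 2 * (u ⬝ᵥ psi (A * Tmap u R θ)) = 0)
    (hflow : Ufun A u γ R θ - Θ.inf' hΘne (fun θ' => Ufun A u γ R θ') ≤ δ) :
    R = 1 ∧ θ = 0 :=
  flow_set_critical_point_is_identity_general A hA u Θ hΘne hΘ θm hθm Δstar hΔ γ δ hγ hγ' hδ' R hR θ
    hcrit1 hcrit2 hflow
end
end

section
/- Let A be a symmetric positive definite real 3×3 matrix and Ā := (1/2)(tr(A)I₃ − A) with largest eigenvalue λ_M^Ā. Then for every T ∈ SO(3): ‖ψ(A·T)‖² ≤ (λ_M^Ā)² · tr(I₃ − T). In particular ‖ψ(A·T)‖ ≤ 2λ_M^Ā for all T ∈ SO(3). -/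
open Matrix

noncomputable section

/-! Every `T ∈ SO(3)` is a Rodrigues rotation `Ra θ u`: its axis `u` is a unit fixed vector
(`det (T - 1) = 0`), and Cayley–Hamilton with `adj T = Tᵀ` forces the symmetric part of `T` to be
`cos θ • 1 + (1 - cos θ) • u uᵀ`. For symmetric `A` one has `ψ(A [u]×) = Ā u` and
`ψ(A [u]×²) = Ā u × u`, so `ψ(A T) = sin θ • p + (1 - cos θ) • (p × u)` with `p = Ā u`, and
`‖ψ(A T)‖² ≤ (sin² θ + (1 - cos θ)²) ‖p‖² = tr(1 - T) ‖p‖²`. Since `Ā` is positive semidefinite,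
`‖Ā u‖ ≤ λ_M^Ā`. -/

lemma Real.exists_cos_eq_sin_eq {c s : ℝ} (h : c ^ 2 + s ^ 2 = 1) :
    ∃ θ, Real.cos θ = c ∧ Real.sin θ = s := by
  have hz : ‖(⟨c, s⟩ : ℂ)‖ = 1 := by
    rw [Complex.norm_def, Complex.normSq_mk, ← sq, ← sq, h, Real.sqrt_one]
  refine ⟨Complex.arg ⟨c, s⟩, ?_, ?_⟩
  · rw [Complex.cos_arg (by rintro h0; simp [h0] at hz), hz, div_one]
  · rw [Complex.sin_arg, hz, div_one]

lemma Matrix.eq_zero_of_isSymm_of_mul_self_eq_smul {n : Type*} [Fintype n] {D : Matrix n n ℝ}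
    (hD : D.IsSymm) {k : ℝ} (hDD : D * D = k • D) (htr : D.trace = 0) : D = 0 := by
  rw [← trace_conjTranspose_mul_self_eq_zero_iff, conjTranspose_eq_transpose_of_trivial, hD.eq,
    hDD, trace_smul, htr, smul_zero]

lemma Matrix.IsHermitian.mulVec_dotProduct_mulVec_le {n : Type*} [Fintype n] [DecidableEq n]
    {H : Matrix n n ℝ} (hH : H.IsHermitian) {lam : ℝ} (hlam : ∀ i, |hH.eigenvalues i| ≤ lam)
    (x : n → ℝ) : (H *ᵥ x) ⬝ᵥ (H *ᵥ x) ≤ lam ^ 2 * (x ⬝ᵥ x) := by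
  set b := hH.eigenvectorBasis
  have parseval : ∀ y : n → ℝ, y ⬝ᵥ y = ∑ i, (⇑(b i) ⬝ᵥ y) ^ 2 := fun y => by
    have := b.sum_inner_mul_inner (WithLp.toLp 2 y) (WithLp.toLp 2 y)
    simp only [EuclideanSpace.inner_eq_star_dotProduct, star_trivial] at this
    simpa only [sq, dotProduct_comm y] using this.symm
  have hcoord : ∀ i, ⇑(b i) ⬝ᵥ (H *ᵥ x) = hH.eigenvalues i * (⇑(b i) ⬝ᵥ x) := fun i => by
    rw [dotProduct_mulVec, ← mulVec_transpose, ← conjTranspose_eq_transpose_of_trivial, hH.eq,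
      hH.mulVec_eigenvectorBasis, smul_dotProduct, smul_eq_mul]
  rw [parseval, parseval x, Finset.mul_sum]
  refine Finset.sum_le_sum fun i _ => ?_
  rw [hcoord, mul_pow]
  exact mul_le_mul_of_nonneg_right (sq_le_sq' (abs_le.mp (hlam i)).1 (abs_le.mp (hlam i)).2)
    (sq_nonneg _)

lemma Matrix.adjugate_fin_three_eq (M : Matrix (Fin 3) (Fin 3) ℝ) :
    M.adjugate = M * M - M.trace • M + M.adjugate.trace • 1 := by
  ext i j
  fin_cases i <;> fin_cases j <;>
    simp [adjugate_fin_three, trace_fin_three, mul_apply, Fin.sum_univ_three] <;> ring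

lemma dotProduct_self_smul_add_smul_cross_le (a b : ℝ) (p : V3) {u : V3} (hu : u ⬝ᵥ u = 1) :
    (a • p + b • p ⨯₃ u) ⬝ᵥ (a • p + b • p ⨯₃ u) ≤ (a ^ 2 + b ^ 2) * (p ⬝ᵥ p) := by
  have hcross : p ⨯₃ u ⬝ᵥ p ⨯₃ u = p ⬝ᵥ p - (p ⬝ᵥ u) ^ 2 := by
    rw [cross_dot_cross, hu, dotProduct_comm u p]; ring
  simp only [add_dotProduct, dotProduct_add, smul_dotProduct, dotProduct_smul, smul_eq_mul,
    hcross, dot_self_cross, dotProduct_comm (p ⨯₃ u) p]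
  nlinarith [sq_nonneg (b * (p ⬝ᵥ u))]

lemma skew_mulVec (x y : V3) : skew x *ᵥ y = x ⨯₃ y := by
  ext i; fin_cases i <;> simp [skew, cross_apply, mulVec, dotProduct, Fin.sum_univ_three] <;> ring

lemma skew_smul (a : ℝ) (x : V3) : skew (a • x) = a • skew x := by
  ext i j; fin_cases i <;> fin_cases j <;> simp [skew]

lemma skew_mul_skew (u : V3) : skew u * skew u = vecMulVec u u - (u ⬝ᵥ u) • 1 := by
  ext i j; fin_cases i <;> fin_cases j <;>
    simp [skew, vecMulVec_apply, dotProduct, Fin.sum_univ_three, mul_apply, one_apply] <;> ring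

lemma trace_skew (u : V3) : (skew u).trace = 0 := by
  simp [skew, trace_fin_three]

lemma skew_psi (M : M3) : skew (psi M) = (2⁻¹ : ℝ) • (M - Mᵀ) := by
  ext i j; fin_cases i <;> fin_cases j <;> simp [skew, psi] <;> ring

lemma psi_add (M N : M3) : psi (M + N) = psi M + psi N := by
  ext i; fin_cases i <;> simp [psi] <;> ring

lemma psi_smul (a : ℝ) (M : M3) : psi (a • M) = a • psi M := by
  ext i; fin_cases i <;> simp [psi] <;> ring

lemma psi_eq_zero_of_isSymm {A : M3} (hA : A.IsSymm) : psi A = 0 := by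
  ext i; fin_cases i <;> simp [psi, hA.apply]

lemma psi_eq_smul_of_mulVec_eq {M : M3} {u : V3} (hu : u ⬝ᵥ u = 1) (h : M *ᵥ u = Mᵀ *ᵥ u) :
    psi M = (u ⬝ᵥ psi M) • u := by
  have hcross : psi M ⨯₃ u = 0 := by
    rw [← skew_mulVec, skew_psi, smul_mulVec, sub_mulVec, h, sub_self, smul_zero]
  have := cross_cross_eq_smul_sub_smul' u (psi M) u
  rw [hcross, map_zero, hu, one_smul, dotProduct_comm] at this
  exact sub_eq_zero.mp this.symm

lemma psi_mul_skew {A : M3} (hA : A.IsSymm) (u : V3) : psi (A * skew u) = Abar A *ᵥ u := by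
  ext i; fin_cases i <;>
    simp [psi, Abar, skew, mul_apply, mulVec, dotProduct, trace_fin_three, Fin.sum_univ_three,
      one_apply, hA.apply 0 1, hA.apply 0 2, hA.apply 1 2] <;> ring

lemma psi_mul_skew_mul_skew {A : M3} (hA : A.IsSymm) (u : V3) :
    psi (A * (skew u * skew u)) = (Abar A *ᵥ u) ⨯₃ u := by
  ext i; fin_cases i <;>
    simp [psi, Abar, skew, mul_apply, mulVec, dotProduct, trace_fin_three, Fin.sum_univ_three,
      one_apply, cross_apply, hA.apply 0 1, hA.apply 0 2, hA.apply 1 2] <;> ring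

lemma dotProduct_Abar_mulVec (A : M3) (x : V3) :
    x ⬝ᵥ (Abar A *ᵥ x) = 2⁻¹ * ((skew x)ᵀ * A * skew x).trace := by
  simp [Abar, skew, mulVec, dotProduct, trace_fin_three, Fin.sum_univ_three, mul_apply, one_apply]
  ring

lemma posSemidef_Abar {A : M3} (hA : A.PosSemidef) : (Abar A).PosSemidef := by
  refine .of_dotProduct_mulVec_nonneg ?_ fun x => ?_
  · have hsymm : A.IsSymm := isHermitian_iff_isSymm.mp hA.1
    simp [IsSymm, Abar, hsymm.eq]
  · rw [star_trivial, dotProduct_Abar_mulVec, ← conjTranspose_eq_transpose_of_trivial]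
    exact mul_nonneg (by norm_num) (hA.conjTranspose_mul_mul_same _).trace_nonneg

lemma psi_mul_Ra {A : M3} (hA : A.IsSymm) (θ : ℝ) (u : V3) :
    psi (A * Ra θ u) = Real.sin θ • (Abar A *ᵥ u) + (1 - Real.cos θ) • ((Abar A *ᵥ u) ⨯₃ u) := by
  simp only [Ra, Matrix.mul_add, mul_smul_comm, Matrix.mul_one, psi_add, psi_smul,
    psi_eq_zero_of_isSymm hA, psi_mul_skew hA, psi_mul_skew_mul_skew hA, zero_add]

lemma trace_one_sub_Ra {u : V3} (hu : u ⬝ᵥ u = 1) (θ : ℝ) :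
    ((1 : M3) - Ra θ u).trace = 2 * (1 - Real.cos θ) := by
  simp only [Ra, skew_mul_skew, trace_sub, trace_add, trace_smul, trace_skew, trace_vecMulVec,
    trace_one, hu, Fintype.card_fin, smul_eq_mul]
  ring

lemma trace_transpose_mul_self_rodrigues {u : V3} (hu : u ⬝ᵥ u = 1) (c s : ℝ) :
    ((1 + s • skew u + (1 - c) • (skew u * skew u))ᵀ *
      (1 + s • skew u + (1 - c) • (skew u * skew u))).trace = 1 + 2 * (c ^ 2 + s ^ 2) := by
  simp only [dotProduct, Fin.sum_univ_three] at hu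
  simp [trace_fin_three, mul_apply, Fin.sum_univ_three, skew, one_apply]
  linear_combination
    (2 * (1 - c) ^ 2 * (u 0 * u 0 + u 1 * u 1 + u 2 * u 2 + 1) + 2 * s ^ 2 - 4 * (1 - c)) * hu

section SO3

variable {T : M3} (hT : T ∈ SO3)
include hT

lemma mul_transpose_self_of_mem_SO3 : T * Tᵀ = 1 := mul_eq_one_comm.mp hT.1

lemma transpose_mulVec_eq_self_of_mem_SO3 {u : V3} (hTu : T *ᵥ u = u) : Tᵀ *ᵥ u = u :=
  calc Tᵀ *ᵥ u = Tᵀ *ᵥ (T *ᵥ u) := by rw [hTu]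
    _ = u := by rw [mulVec_mulVec, hT.1, one_mulVec]

lemma det_sub_one_of_mem_SO3 : (T - 1).det = 0 := by
  have h : T - 1 = T * (1 - T)ᵀ := by
    rw [transpose_sub, transpose_one, Matrix.mul_sub, Matrix.mul_one,
      mul_transpose_self_of_mem_SO3 hT]
  have := congrArg det h
  rw [det_mul, det_transpose, hT.2, one_mul, ← neg_sub T, det_neg] at this
  norm_num at this
  linarith

lemma exists_unit_mulVec_eq_self_of_mem_SO3 : ∃ u : V3, u ⬝ᵥ u = 1 ∧ T *ᵥ u = u := by
  obtain ⟨w, hw, hTw⟩ := exists_mulVec_eq_zero_iff.mpr (det_sub_one_of_mem_SO3 hT)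
  have hww : 0 < w ⬝ᵥ w :=
    lt_of_le_of_ne (Finset.sum_nonneg fun i _ => mul_self_nonneg (w i))
      (Ne.symm (dotProduct_self_eq_zero.not.mpr hw))
  refine ⟨(√(w ⬝ᵥ w))⁻¹ • w, ?_, ?_⟩
  · rw [smul_dotProduct, dotProduct_smul, smul_smul, smul_eq_mul, ← mul_inv,
      Real.mul_self_sqrt hww.le, inv_mul_cancel₀ hww.ne']
  · rw [sub_mulVec, one_mulVec, sub_eq_zero] at hTw
    rw [mulVec_smul, hTw]

lemma adjugate_eq_transpose_of_mem_SO3 : T.adjugate = Tᵀ :=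
  calc T.adjugate = Tᵀ * (T * T.adjugate) := by rw [← Matrix.mul_assoc, hT.1, Matrix.one_mul]
    _ = Tᵀ := by rw [mul_adjugate, hT.2, one_smul, Matrix.mul_one]

lemma mul_self_of_mem_SO3 : T * T = Tᵀ + T.trace • T - T.trace • 1 := by
  have h := adjugate_fin_three_eq T
  rw [adjugate_eq_transpose_of_mem_SO3 hT, trace_transpose] at h
  rw [h]; abel

lemma add_transpose_sq_of_mem_SO3 :
    (T + Tᵀ) * (T + Tᵀ) = (1 + T.trace) • (T + Tᵀ) + (2 - 2 * T.trace) • 1 := by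
  have hTT := mul_self_of_mem_SO3 hT
  have hTtTt : Tᵀ * Tᵀ = T + T.trace • Tᵀ - T.trace • 1 := by
    rw [← transpose_mul, hTT]; simp [transpose_add, transpose_sub]
  rw [Matrix.add_mul, Matrix.mul_add, Matrix.mul_add, hTT, hTtTt, hT.1,
    mul_transpose_self_of_mem_SO3 hT]
  module

lemma add_transpose_of_mem_SO3 {u : V3} (hu : u ⬝ᵥ u = 1) (hTu : T *ᵥ u = u) :
    T + Tᵀ = (T.trace - 1) • 1 + (3 - T.trace) • vecMulVec u u := by
  set t := T.trace
  set S := T + Tᵀ with hS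
  set P := vecMulVec u u
  have hSsymm : Sᵀ = S := by rw [hS, transpose_add, transpose_transpose, add_comm]
  have hSu : S *ᵥ u = (2 : ℝ) • u := by
    rw [hS, add_mulVec, hTu, transpose_mulVec_eq_self_of_mem_SO3 hT hTu, two_smul]
  have hSS : S * S = (1 + t) • S + (2 - 2 * t) • 1 := add_transpose_sq_of_mem_SO3 hT
  have hSP : S * P = (2 : ℝ) • P := by rw [mul_vecMulVec, hSu, smul_vecMulVec]
  have hPS : P * S = (2 : ℝ) • P := by
    rw [vecMulVec_mul, ← mulVec_transpose, hSsymm, hSu, vecMulVec_smul]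
  have hPP : P * P = P := by rw [vecMulVec_mul_vecMulVec, hu, one_smul]
  -- `D` is symmetric and traceless with `D * D = (3 - t) • D`, so `tr (Dᵀ D) = 0`.
  set D := S - (t - 1) • 1 - (3 - t) • P with hD
  have hDsymm : D.IsSymm := by
    simp only [IsSymm, hD, transpose_sub, transpose_smul, transpose_one, hSsymm, P,
      transpose_vecMulVec]
  have hDD : D * D = (3 - t) • D := by
    simp only [hD, Matrix.sub_mul, Matrix.mul_sub, smul_mul_assoc, mul_smul_comm,
      Matrix.one_mul, Matrix.mul_one, hSS, hSP, hPS, hPP]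
    module
  have htrD : D.trace = 0 := by
    simp only [hD, trace_sub, trace_smul, trace_one, hS, trace_add, trace_transpose, P,
      trace_vecMulVec, hu, Fintype.card_fin, smul_eq_mul, t]
    ring
  rw [← sub_eq_zero, sub_add_eq_sub_sub]
  exact eq_zero_of_isSymm_of_mul_self_eq_smul hDsymm hDD htrD

end SO3

lemma exists_eq_Ra_of_mem_SO3 {T : M3} (hT : T ∈ SO3) : ∃ θ u, u ⬝ᵥ u = 1 ∧ T = Ra θ u := by
  obtain ⟨u, hu, hTu⟩ := exists_unit_mulVec_eq_self_of_mem_SO3 hT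
  set c := (T.trace - 1) / 2
  set s := u ⬝ᵥ psi T
  have hsymm := add_transpose_of_mem_SO3 hT hu hTu
  have hskew : T - Tᵀ = (2 * s) • skew u := by
    have hpsi := psi_eq_smul_of_mulVec_eq hu
      (hTu.trans (transpose_mulVec_eq_self_of_mem_SO3 hT hTu).symm)
    have := skew_psi T
    rw [hpsi, skew_smul] at this
    rw [mul_smul, this, smul_smul]; norm_num
  have hrod : T = 1 + s • skew u + (1 - c) • (skew u * skew u) :=
    calc T = (2⁻¹ : ℝ) • ((T + Tᵀ) + (T - Tᵀ)) := by module
      _ = _ := by rw [hsymm, hskew, skew_mul_skew, hu]; module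
  have hcs : c ^ 2 + s ^ 2 = 1 := by
    have := trace_transpose_mul_self_rodrigues hu c s
    rw [← hrod, hT.1, trace_one, Fintype.card_fin, Nat.cast_ofNat] at this
    linarith
  obtain ⟨θ, hc, hs⟩ := Real.exists_cos_eq_sin_eq hcs
  exact ⟨θ, u, hu, by rw [hrod, Ra, hc, hs]⟩

lemma trace_one_sub_le_four_of_mem_SO3 {T : M3} (hT : T ∈ SO3) : ((1 : M3) - T).trace ≤ 4 := by
  obtain ⟨θ, u, hu, rfl⟩ := exists_eq_Ra_of_mem_SO3 hT
  rw [trace_one_sub_Ra hu]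
  linarith [Real.neg_one_le_cos θ]

lemma psi_mul_Ra_dotProduct_self_le {A : M3} (hA : A.IsSymm) {lam : ℝ}
    (hAbar : ∀ x, (Abar A *ᵥ x) ⬝ᵥ (Abar A *ᵥ x) ≤ lam ^ 2 * (x ⬝ᵥ x)) (θ : ℝ) {u : V3}
    (hu : u ⬝ᵥ u = 1) :
    psi (A * Ra θ u) ⬝ᵥ psi (A * Ra θ u) ≤ lam ^ 2 * ((1 : M3) - Ra θ u).trace := by
  rw [psi_mul_Ra hA, trace_one_sub_Ra hu]
  calc _ ≤ (Real.sin θ ^ 2 + (1 - Real.cos θ) ^ 2) * (Abar A *ᵥ u ⬝ᵥ Abar A *ᵥ u) :=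
        dotProduct_self_smul_add_smul_cross_le _ _ _ hu
    _ ≤ (Real.sin θ ^ 2 + (1 - Real.cos θ) ^ 2) * lam ^ 2 := by
        gcongr
        simpa [hu] using hAbar u
    _ = lam ^ 2 * (2 * (1 - Real.cos θ)) := by
        linear_combination lam ^ 2 * Real.sin_sq_add_cos_sq θ

theorem psi_bound_on_SO3_general
    (A : M3) (hA : A.PosDef)
    (lamM : ℝ)
    (hbound : ∀ lam : ℝ, IsEigen (Abar A) lam → lam ≤ lamM) :
    (∀ T ∈ SO3, psi (A * T) ⬝ᵥ psi (A * T) ≤ lamM ^ 2 * ((1 : M3) - T).trace) ∧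
    (∀ T ∈ SO3, enorm3 (psi (A * T)) ≤ 2 * lamM) := by
  have hAbar := posSemidef_Abar hA.posSemidef
  have heig : ∀ i, |hAbar.1.eigenvalues i| ≤ lamM := fun i => by
    rw [abs_of_nonneg (hAbar.eigenvalues_nonneg i)]
    refine hbound _ ⟨_, ?_, hAbar.1.mulVec_eigenvectorBasis i⟩
    simpa using hAbar.1.eigenvectorBasis.orthonormal.ne_zero i
  have hlam : 0 ≤ lamM := (abs_nonneg _).trans (heig 0)
  have hpsi : ∀ T ∈ SO3, psi (A * T) ⬝ᵥ psi (A * T) ≤ lamM ^ 2 * ((1 : M3) - T).trace := by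
    intro T hT
    obtain ⟨θ, u, hu, rfl⟩ := exists_eq_Ra_of_mem_SO3 hT
    exact psi_mul_Ra_dotProduct_self_le (isHermitian_iff_isSymm.mp hA.1)
      (hAbar.1.mulVec_dotProduct_mulVec_le heig) θ hu
  refine ⟨hpsi, fun T hT => ?_⟩
  rw [enorm3, Real.sqrt_le_left (by linarith)]
  calc _ ≤ lamM ^ 2 * ((1 : M3) - T).trace := hpsi T hT
    _ ≤ lamM ^ 2 * 4 := by gcongr; exact trace_one_sub_le_four_of_mem_SO3 hT
    _ = (2 * lamM) ^ 2 := by ring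

theorem psi_bound_on_SO3
    (A : M3) (hA : A.PosDef)
    (lamM : ℝ) (hM : IsEigen (Abar A) lamM)
    (hbound : ∀ lam : ℝ, IsEigen (Abar A) lam → lam ≤ lamM) :
    (∀ T ∈ SO3, psi (A * T) ⬝ᵥ psi (A * T) ≤ lamM ^ 2 * ((1 : M3) - T).trace) ∧
    (∀ T ∈ SO3, enorm3 (psi (A * T)) ≤ 2 * lamM) :=
  psi_bound_on_SO3_general A hA lamM hbound
end
end
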